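/- If the weight matrices satisfy A_i A_j^H + A_j A_i^H = 0, then for every complex channel matrix H, the columns h_i and h_j of the equivalent real channel matrix H_eq = (I ⊗ Ȟ)·G are orthogonal: ⟨h_i, h_j⟩ = 0, where G is the generator matrix whose i-th column is the realified vectorization of A_i. -/

import Mathlib

/-!
Column `k` of `H_eq` is the realification of `vec(H A_k)`, so the real inner product of
columns `i` and `j` is `Re tr((H A_i)(H A_j)ᴴ) = Re tr(H (A_i A_jᴴ) Hᴴ)`. The hypothesis says
that `A_i A_jᴴ` is skew-Hermitian; congruence by `H` preserves this, and the trace of a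
skew-Hermitian matrix is purely imaginary.
-/

open Matrix Finset Kronecker

/-- The realification `Ȟ` of a complex channel matrix `H`: each entry `x` is replaced by
the 2×2 block `[[Re x, −Im x],[Im x, Re x]]`. -/
def checkMat {nr n : ℕ} (H : Matrix (Fin nr) (Fin n) ℂ) :
    Matrix (Fin nr × Fin 2) (Fin n × Fin 2) ℝ := fun p q =>
  if p.2 = 0 then (if q.2 = 0 then (H p.1 q.1).re else -(H p.1 q.1).im)
  else (if q.2 = 0 then (H p.1 q.1).im else (H p.1 q.1).re)

/-- The generator matrix `G` of a linear STBC: its `k`-th column is the realified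
vectorization of the weight matrix `A_k` (columns stacked, real and imaginary parts
interleaved). -/
def genMat {n K : ℕ} (A : Fin K → Matrix (Fin n) (Fin n) ℂ) :
    Matrix (Fin n × Fin n × Fin 2) (Fin K) ℝ := fun idx k =>
  if idx.2.2 = 0 then (A k idx.2.1 idx.1).re else (A k idx.2.1 idx.1).im

/-- The equivalent real channel matrix `H_eq = (I_n ⊗ Ȟ)·G`. -/
def heqMat {nr n K : ℕ} (H : Matrix (Fin nr) (Fin n) ℂ)
    (A : Fin K → Matrix (Fin n) (Fin n) ℂ) :
    Matrix (Fin n × (Fin nr × Fin 2)) (Fin K) ℝ :=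
  ((1 : Matrix (Fin n) (Fin n) ℝ) ⊗ₖ checkMat H) * genMat A

namespace Matrix

variable {m l : Type*} [Fintype m]

theorem re_trace_mul_conjTranspose [Fintype l] (M N : Matrix m l ℂ) :
    (M * Nᴴ).trace.re = ∑ c, ∑ r, ((M r c).re * (N r c).re + (M r c).im * (N r c).im) := by
  rw [trace, Finset.sum_comm]
  simp [Matrix.mul_apply, Complex.re_sum, Complex.mul_re]

theorem re_trace_eq_zero_of_add_conjTranspose_eq_zero {X : Matrix m m ℂ} (hX : X + Xᴴ = 0) :
    X.trace.re = 0 := by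
  have h := congrArg (fun Y => Y.trace.re) hX
  simp only [trace_add, trace_conjTranspose, Complex.add_re, Complex.star_def,
    Complex.conj_re, trace_zero, Complex.zero_re] at h
  linarith

theorem mul_mul_conjTranspose_add_conjTranspose (H : Matrix l m ℂ) (X : Matrix m m ℂ) :
    H * X * Hᴴ + (H * X * Hᴴ)ᴴ = H * (X + Xᴴ) * Hᴴ := by
  simp [conjTranspose_mul, Matrix.mul_add, Matrix.add_mul, Matrix.mul_assoc]

end Matrix

theorem heqMat_apply {nr n K : ℕ} (H : Matrix (Fin nr) (Fin n) ℂ)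
    (A : Fin K → Matrix (Fin n) (Fin n) ℂ) (c : Fin n) (r : Fin nr) (s : Fin 2) (k : Fin K) :
    heqMat H A (c, (r, s)) k =
      if s = 0 then ((H * A k) r c).re else ((H * A k) r c).im := by
  simp only [heqMat, Matrix.mul_apply, Fintype.sum_prod_type, kroneckerMap_apply,
    Matrix.one_apply, ite_mul, one_mul, zero_mul]
  fin_cases s <;>
    simp [checkMat, genMat, Complex.re_sum, Complex.im_sum, Complex.mul_re, Complex.mul_im,
      Fin.sum_univ_two, sub_eq_add_neg, Finset.sum_add_distrib, add_comm]

theorem sum_heqMat_mul_heqMat {nr n K : ℕ} (H : Matrix (Fin nr) (Fin n) ℂ)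
    (A : Fin K → Matrix (Fin n) (Fin n) ℂ) (i j : Fin K) :
    ∑ idx, heqMat H A idx i * heqMat H A idx j =
      (H * (A i * (A j)ᴴ) * Hᴴ).trace.re := by
  have hHA : H * (A i * (A j)ᴴ) * Hᴴ = H * A i * (H * A j)ᴴ := by
    simp [conjTranspose_mul, Matrix.mul_assoc]
  rw [hHA, re_trace_mul_conjTranspose]
  simp [Fintype.sum_prod_type, Fin.sum_univ_two, heqMat_apply]

/-- If `A_i A_j^H + A_j A_i^H = 0` then, for every channel realization `H`, the columns
`h_i` and `h_j` of `H_eq = (I ⊗ Ȟ)G` are orthogonal. -/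
theorem columns_orthogonal_of_hr_orthogonal {nr n K : ℕ}
    (A : Fin K → Matrix (Fin n) (Fin n) ℂ) (i j : Fin K)
    (hA : A i * (A j)ᴴ + A j * (A i)ᴴ = 0)
    (H : Matrix (Fin nr) (Fin n) ℂ) :
    ∑ idx, heqMat H A idx i * heqMat H A idx j = 0 := by
  have hskew : A i * (A j)ᴴ + (A i * (A j)ᴴ)ᴴ = 0 := by
    simpa [conjTranspose_mul] using hA
  rw [sum_heqMat_mul_heqMat]
  apply re_trace_eq_zero_of_add_conjTranspose_eq_zero
  rw [mul_mul_conjTranspose_add_conjTranspose, hskew, Matrix.mul_zero, Matrix.zero_mul]
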